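/- Let A and B be n×n real symmetric positive semidefinite matrices. Then (det A)·(det B) ≤ det(A ∘ B), where A ∘ B is the Hadamard product. -/

import Mathlib

/-!
Oppenheim's inequality `det A * ∏ i, B i i ≤ det (A ⊙ B)` goes by induction on the size,
eliminating the `(0, 0)` entry. Write `M'` for `M` without its first row and column, `S M` for the
Schur complement of `M 0 0` and `R M = M' - S M` for the rank-one correction. Then
`det M = M 0 0 * det (S M)` and `S (A ⊙ B) = S A ⊙ B' + R A ⊙ S B`. Both summands are positive
semidefinite by the Schur product theorem, and adding a positive semidefinite matrix does not
decrease the determinant, so the induction hypothesis for `S A ⊙ B'` closes the step.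
Oppenheim's inequality for `B ⊙ 1` is Hadamard's inequality `det B ≤ ∏ i, B i i`, and the two
combine to the theorem.
-/

open scoped Matrix

namespace Matrix

section

variable {n : Type*} [Fintype n] [DecidableEq n]

theorem PosSemidef.one_le_det_one_add {P : Matrix n n ℝ} (hP : P.PosSemidef) :
    1 ≤ (1 + P).det := by
  rw [hP.1.spectral_theorem, Unitary.conjStarAlgAut_apply, det_one_add_mul_comm,
    ← Matrix.mul_assoc, Unitary.coe_star_mul_self, Matrix.one_mul, ← diagonal_one, diagonal_add,
    det_diagonal]
  exact Finset.one_le_prod fun i => by simpa using hP.eigenvalues_nonneg i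

open scoped MatrixOrder in
theorem PosSemidef.det_le_det_add {M N : Matrix n n ℝ} (hM : M.PosSemidef) (hN : N.PosSemidef) :
    M.det ≤ (M + N).det := by
  by_cases hM0 : M.det = 0
  · exact hM0 ▸ (hM.add hN).det_nonneg
  obtain ⟨B, rfl⟩ := CStarAlgebra.nonneg_iff_eq_star_mul_self.mp hM.nonneg
  have hB : IsUnit B.det := isUnit_iff_ne_zero.2 fun h => hM0 (by simp [h])
  have hsplit : star B * B + N = Bᴴ * (1 + B⁻¹ᴴ * N * B⁻¹) * B := by
    rw [Matrix.mul_add, Matrix.add_mul, Matrix.mul_one, star_eq_conjTranspose]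
    congr 1
    rw [← Matrix.mul_assoc, ← Matrix.mul_assoc, ← conjTranspose_mul, nonsing_inv_mul _ hB,
      conjTranspose_one, Matrix.one_mul, Matrix.mul_assoc, nonsing_inv_mul _ hB, Matrix.mul_one]
  have hdet : (star B * B + N).det = (star B * B).det * (1 + B⁻¹ᴴ * N * B⁻¹).det := by
    rw [hsplit, det_mul, det_mul, det_mul, star_eq_conjTranspose]
    ring
  rw [hdet]
  exact le_mul_of_one_le_right hM.det_nonneg (hN.conjTranspose_mul_mul_same _).one_le_det_one_add

open scoped ComplexOrder in
theorem PosSemidef.det_eq_zero_of_diag_eq_zero {𝕜 : Type*} [RCLike 𝕜] {A : Matrix n n 𝕜}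
    (hA : A.PosSemidef) {i : n} (h : A i i = 0) : A.det = 0 := by
  have hcol : A *ᵥ Pi.single i 1 = 0 := (hA.dotProduct_mulVec_zero_iff _).1 (by simp [h])
  exact det_eq_zero_of_column_eq_zero i fun j => by simpa using congrFun hcol j

end

section SchurComplement

def finSumUnitEquiv (n : ℕ) : Fin n ⊕ Unit ≃ Fin (n + 1) :=
  (Equiv.optionEquivSumPUnit (Fin n)).symm.trans (finSuccEquiv n).symm

theorem submatrix_finSumUnitEquiv {R : Type*} [Zero R] {n : ℕ}
    (M : Matrix (Fin (n + 1)) (Fin (n + 1)) R) :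
    M.submatrix (finSumUnitEquiv n) (finSumUnitEquiv n) =
      fromBlocks (M.submatrix Fin.succ Fin.succ) (replicateCol Unit (Fin.tail (M · 0)))
        (replicateRow Unit (Fin.tail (M 0))) (diagonal fun _ => M 0 0) := by
  ext (i | i) (j | j) <;> simp [finSumUnitEquiv, Fin.tail]

variable {K : Type*} [Field K] {n : ℕ}

def pivotRankOne (M : Matrix (Fin (n + 1)) (Fin (n + 1)) K) : Matrix (Fin n) (Fin n) K :=
  (M 0 0)⁻¹ • vecMulVec (Fin.tail (M · 0)) (Fin.tail (M 0))

/-- Since `0⁻¹ = 0`, this is the trailing principal submatrix when `M 0 0 = 0`. -/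
def schurCompl00 (M : Matrix (Fin (n + 1)) (Fin (n + 1)) K) : Matrix (Fin n) (Fin n) K :=
  M.submatrix Fin.succ Fin.succ - pivotRankOne M

theorem schurCompl00_eq_sub_mul_inv_mul (M : Matrix (Fin (n + 1)) (Fin (n + 1)) K) :
    schurCompl00 M = M.submatrix Fin.succ Fin.succ - replicateCol Unit (Fin.tail (M · 0)) *
      (diagonal fun _ => M 0 0 : Matrix Unit Unit K)⁻¹ * replicateRow Unit (Fin.tail (M 0)) := by
  ext i j
  simp only [schurCompl00, pivotRankOne, sub_apply, submatrix_apply, smul_apply, vecMulVec_apply,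
    smul_eq_mul, inv_subsingleton, diagonal_apply_eq, Ring.inverse_eq_inv', mul_apply,
    Finset.univ_unique, PUnit.default_eq_unit, replicateCol_apply, Finset.sum_const,
    Finset.card_singleton, one_smul, replicateRow_apply, sub_right_inj]
  ring

theorem det_eq_mul_det_schurCompl00 {M : Matrix (Fin (n + 1)) (Fin (n + 1)) K} (h : M 0 0 ≠ 0) :
    M.det = M 0 0 * (schurCompl00 M).det := by
  have := (diagonal fun _ : Unit => M 0 0).invertibleOfIsUnitDet (by simp [h])
  rw [← det_submatrix_equiv_self (finSumUnitEquiv n), submatrix_finSumUnitEquiv, det_fromBlocks₂₂,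
    invOf_eq_nonsing_inv, ← schurCompl00_eq_sub_mul_inv_mul]
  simp

theorem pivotRankOne_hadamard (A B : Matrix (Fin (n + 1)) (Fin (n + 1)) K) :
    pivotRankOne (A ⊙ B) = pivotRankOne A ⊙ pivotRankOne B := by
  ext i j
  simp only [pivotRankOne, hadamard_apply, smul_apply, vecMulVec_apply, Fin.tail, smul_eq_mul]
  ring

theorem schurCompl00_hadamard (A B : Matrix (Fin (n + 1)) (Fin (n + 1)) K) :
    schurCompl00 (A ⊙ B) =
      schurCompl00 A ⊙ B.submatrix Fin.succ Fin.succ + pivotRankOne A ⊙ schurCompl00 B := by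
  rw [schurCompl00, pivotRankOne_hadamard]
  ext i j
  simp only [schurCompl00, sub_apply, submatrix_apply, hadamard_apply, add_apply]
  ring

theorem PosSemidef.pivotRankOne {M : Matrix (Fin (n + 1)) (Fin (n + 1)) ℝ} (hM : M.PosSemidef) :
    (pivotRankOne M).PosSemidef := by
  have hrow : Fin.tail (M 0) = star (Fin.tail (M · 0)) := funext fun j => hM.1.apply _ _
  rw [Matrix.pivotRankOne, hrow]
  exact (posSemidef_vecMulVec_self_star _).smul (inv_nonneg.2 hM.diag_nonneg)

theorem PosSemidef.schurCompl00 {M : Matrix (Fin (n + 1)) (Fin (n + 1)) ℝ} (hM : M.PosSemidef)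
    (h : 0 < M 0 0) : (schurCompl00 M).PosSemidef := by
  have := (diagonal fun _ : Unit => M 0 0).invertibleOfIsUnitDet (by simp [h.ne'])
  have hrow : replicateRow Unit (Fin.tail (M 0)) = (replicateCol Unit (Fin.tail (M · 0)))ᴴ := by
    ext _ j
    exact (hM.1.apply _ _).symm
  have hblocks := hM.submatrix (finSumUnitEquiv n)
  rw [submatrix_finSumUnitEquiv, hrow, PosDef.fromBlocks₂₂ _ _ (by simp [h])] at hblocks
  rwa [schurCompl00_eq_sub_mul_inv_mul, hrow]

end SchurComplement

theorem PosSemidef.det_mul_prod_diag_le_det_hadamard {n : ℕ} {A B : Matrix (Fin n) (Fin n) ℝ}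
    (hA : A.PosSemidef) (hB : B.PosSemidef) : A.det * ∏ i, B i i ≤ (A ⊙ B).det := by
  induction n with
  | zero => simp
  | succ n ih =>
    have hAB := hA.hadamard hB
    rcases (hA.diag_nonneg (i := 0)).eq_or_lt with hA0 | hA0
    · rw [hA.det_eq_zero_of_diag_eq_zero hA0.symm, zero_mul]
      exact hAB.det_nonneg
    rcases (hB.diag_nonneg (i := 0)).eq_or_lt with hB0 | hB0
    · rw [Fin.prod_univ_succ, ← hB0, zero_mul, mul_zero]
      exact hAB.det_nonneg
    have hAB0 : 0 ≤ A 0 0 * B 0 0 := by positivity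
    have hsum := ((hA.schurCompl00 hA0).hadamard (hB.submatrix Fin.succ)).det_le_det_add
      (hA.pivotRankOne.hadamard (hB.schurCompl00 hB0))
    rw [← schurCompl00_hadamard] at hsum
    calc A.det * ∏ i, B i i
        = A 0 0 * B 0 0 * (A.schurCompl00.det * ∏ i, B.submatrix Fin.succ Fin.succ i i) := by
          rw [det_eq_mul_det_schurCompl00 hA0.ne', Fin.prod_univ_succ]
          simp only [submatrix_apply]
          ring
      _ ≤ A 0 0 * B 0 0 * (A.schurCompl00 ⊙ B.submatrix Fin.succ Fin.succ).det :=
          mul_le_mul_of_nonneg_left (ih (hA.schurCompl00 hA0) (hB.submatrix Fin.succ)) hAB0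
      _ ≤ A 0 0 * B 0 0 * (A ⊙ B).schurCompl00.det := mul_le_mul_of_nonneg_left hsum hAB0
      _ = (A ⊙ B).det := (det_eq_mul_det_schurCompl00 (M := A ⊙ B) (mul_pos hA0 hB0).ne').symm

theorem PosSemidef.det_le_prod_diag {n : ℕ} {B : Matrix (Fin n) (Fin n) ℝ} (hB : B.PosSemidef) :
    B.det ≤ ∏ i, B i i := by
  simpa [hadamard_one] using hB.det_mul_prod_diag_le_det_hadamard PosSemidef.one

end Matrix

/-- Oppenheim-type inequality: for `n × n` real symmetric positive semidefinite
matrices `A` and `B`, `(det A)·(det B) ≤ det (A ∘ B)` for the Hadamard product. -/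
theorem det_mul_det_le_det_hadamard (n : ℕ) (A B : Matrix (Fin n) (Fin n) ℝ)
    (hA : A.PosSemidef) (hB : B.PosSemidef) :
    A.det * B.det ≤ (A ⊙ B).det :=
  calc A.det * B.det ≤ A.det * ∏ i, B i i :=
        mul_le_mul_of_nonneg_left hB.det_le_prod_diag hA.det_nonneg
    _ ≤ (A ⊙ B).det := hA.det_mul_prod_diag_le_det_hadamard hB
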